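/- If P is a positive definite symmetric solution of the Riccati equation SP + PS^T - 2μ P C^T C P + aI = 0 with a > 0, and λ ∈ ℂ satisfies Re(λ) ≥ μ, then the matrix S - λ P C^T C is Hurwitz (all eigenvalues have negative real part). -/

import Mathlib

open Matrix
open scoped ComplexOrder

/-!
Put `M = S - λ P CᵀC` (complexified). Since `Pᵀ = P`, the Riccati equation rearranges into the
Lyapunov identity `-(M P + P Mᴴ) = a I + (λ + λ̄ - 2μ) (C P)ᴴ (C P)`, whose right-hand side is
positive definite because `a > 0` and `λ + λ̄ = 2 Re λ ≥ 2μ`. If `z` is an eigenvalue of `M`, take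
`u ≠ 0` with `Mᴴ u = z̄ u`; then `u* (M P + P Mᴴ) u = 2 Re z · u* P u` with `u* P u > 0`, so
`Re z < 0`. Working with `Mᴴ` instead of `M` avoids inverting `P`.
-/

namespace Matrix

theorem exists_mulVec_eq_smul_of_mem_spectrum {K n : Type*} [Field K] [Fintype n]
    [DecidableEq n] {A : Matrix n n K} {z : K} (hz : z ∈ spectrum K A) :
    ∃ v ≠ 0, A *ᵥ v = z • v := by
  rw [← spectrum_toLin'] at hz
  obtain ⟨v, hv⟩ := (Module.End.HasEigenvalue.of_mem_spectrum hz).exists_hasEigenvector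
  exact ⟨v, hv.2, hv.apply_eq_smul⟩

theorem re_lt_zero_of_mem_spectrum_of_posDef {𝕜 n : Type*} [RCLike 𝕜] [Fintype n]
    [DecidableEq n] {M P : Matrix n n 𝕜} (hP : P.PosDef) (hL : (-(M * P + P * Mᴴ)).PosDef)
    {z : 𝕜} (hz : z ∈ spectrum 𝕜 M) : RCLike.re z < 0 := by
  have hz' : star z ∈ spectrum 𝕜 Mᴴ := by
    rwa [← star_eq_conjTranspose, spectrum.map_star, Set.mem_star, star_star]
  obtain ⟨u, hu, hMu⟩ := exists_mulVec_eq_smul_of_mem_spectrum hz'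
  have hleft : star u ᵥ* M = z • star u := by
    rw [← conjTranspose_conjTranspose M, ← star_mulVec, hMu, star_smul, star_star]
  have hquad : star u ⬝ᵥ (M * P + P * Mᴴ) *ᵥ u = (z + star z) * (star u ⬝ᵥ P *ᵥ u) := by
    rw [add_mulVec, dotProduct_add, ← mulVec_mulVec, ← mulVec_mulVec, hMu, dotProduct_mulVec,
      hleft, mulVec_smul, dotProduct_smul, smul_dotProduct, smul_eq_mul, smul_eq_mul, add_mul]
  have hPu := hP.dotProduct_mulVec_pos hu
  have hLu := hL.dotProduct_mulVec_pos hu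
  rw [neg_mulVec, dotProduct_neg, hquad, neg_pos] at hLu
  have hsum : ¬ 0 ≤ z + star z := fun h => (mul_nonneg h hPu.le).not_gt hLu
  rw [RCLike.star_def, RCLike.add_conj, ← RCLike.ofReal_ofNat, ← RCLike.ofReal_mul,
    RCLike.ofReal_nonneg] at hsum
  linarith

variable {l m n : Type*}

theorem map_ofReal_mul [Fintype m] (A : Matrix l m ℝ) (B : Matrix m n ℝ) :
    (A * B).map Complex.ofReal = A.map Complex.ofReal * B.map Complex.ofReal :=
  Matrix.map_mul (f := Complex.ofRealHom)

theorem conjTranspose_map_ofReal (A : Matrix m n ℝ) :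
    (A.map Complex.ofReal)ᴴ = Aᵀ.map Complex.ofReal := by
  rw [← conjTranspose_eq_transpose_of_trivial,
    conjTranspose_map _ fun x => (Complex.conj_ofReal x).symm]

theorem re_star_dotProduct_map_ofReal_mulVec [Fintype n] (P : Matrix n n ℝ) (x : n → ℂ) :
    (star x ⬝ᵥ P.map Complex.ofReal *ᵥ x).re =
      (fun i => (x i).re) ⬝ᵥ P *ᵥ (fun i => (x i).re) +
        (fun i => (x i).im) ⬝ᵥ P *ᵥ (fun i => (x i).im) := by
  simp only [dotProduct, mulVec, map_apply, Pi.star_apply, Finset.mul_sum, Complex.re_sum,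
    ← Finset.sum_add_distrib]
  refine Finset.sum_congr rfl fun i _ => Finset.sum_congr rfl fun j _ => ?_
  simp only [Complex.mul_re, Complex.mul_im, Complex.star_def, Complex.conj_re, Complex.conj_im,
    Complex.ofReal_re, Complex.ofReal_im]
  ring

theorem PosDef.map_ofReal [Fintype n] {P : Matrix n n ℝ} (hP : P.PosDef) :
    (P.map Complex.ofReal).PosDef := by
  have hH : (P.map Complex.ofReal).IsHermitian := by
    rw [IsHermitian, conjTranspose_map_ofReal, ← conjTranspose_eq_transpose_of_trivial,
      hP.isHermitian.eq]
  refine posDef_iff_dotProduct_mulVec.mpr ⟨hH, fun x hx => ?_⟩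
  refine Complex.lt_def.mpr ⟨?_, (hH.im_star_dotProduct_mulVec_self x).symm⟩
  rw [Complex.zero_re, re_star_dotProduct_map_ofReal_mulVec]
  have hre_or_im : (fun i => (x i).re) ≠ 0 ∨ (fun i => (x i).im) ≠ 0 := by
    by_contra! h
    exact hx (funext fun i => Complex.ext (congrFun h.1 i) (congrFun h.2 i))
  have hnonneg (y : n → ℝ) : 0 ≤ y ⬝ᵥ P *ᵥ y := by
    simpa using hP.posSemidef.dotProduct_mulVec_nonneg y
  rcases hre_or_im with h | h
  · exact add_pos_of_pos_of_nonneg (by simpa using hP.dotProduct_mulVec_pos h) (hnonneg _)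
  · exact add_pos_of_nonneg_of_pos (hnonneg _) (by simpa using hP.dotProduct_mulVec_pos h)

theorem neg_lyapunov_eq_of_riccati [Fintype m] [Fintype n] [DecidableEq n]
    {S P : Matrix n n ℝ} {C : Matrix m n ℝ} {μ a : ℝ} (hPsymm : Pᵀ = P)
    (hRic : S * P + P * Sᵀ - (2 * μ) • (P * Cᵀ * C * P) + a • (1 : Matrix n n ℝ) = 0) (lam : ℂ) :
    -((S.map Complex.ofReal - lam • (P * Cᵀ * C).map Complex.ofReal) * P.map Complex.ofReal +
        P.map Complex.ofReal * (S.map Complex.ofReal - lam • (P * Cᵀ * C).map Complex.ofReal)ᴴ) =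
      (a : ℂ) • 1 + (lam + star lam - 2 * μ) •
        (((C * P).map Complex.ofReal)ᴴ * (C * P).map Complex.ofReal) := by
  have hRicC : (S * P).map Complex.ofReal + (P * Sᵀ).map Complex.ofReal
      - (2 * μ : ℂ) • (P * Cᵀ * C * P).map Complex.ofReal + (a : ℂ) • 1 = 0 := by
    rw [← Matrix.map_one _ Complex.ofReal_zero Complex.ofReal_one]
    ext i j
    have hij := congrFun (congrFun hRic i) j
    simp only [Matrix.add_apply, Matrix.sub_apply, Matrix.smul_apply, map_apply,
      Matrix.zero_apply, smul_eq_mul] at hij ⊢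
    exact_mod_cast hij
  have hKP : (P * Cᵀ * C).map Complex.ofReal * P.map Complex.ofReal =
      (P * Cᵀ * C * P).map Complex.ofReal := by
    rw [← map_ofReal_mul]
  have hPK : P.map Complex.ofReal * ((P * Cᵀ * C).map Complex.ofReal)ᴴ =
      (P * Cᵀ * C * P).map Complex.ofReal := by
    rw [conjTranspose_map_ofReal, ← map_ofReal_mul]
    simp only [transpose_mul, transpose_transpose, hPsymm, Matrix.mul_assoc]
  have hCP : ((C * P).map Complex.ofReal)ᴴ * (C * P).map Complex.ofReal =
      (P * Cᵀ * C * P).map Complex.ofReal := by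
    rw [conjTranspose_map_ofReal, ← map_ofReal_mul]
    simp only [transpose_mul, hPsymm, Matrix.mul_assoc]
  rw [hCP, conjTranspose_sub, conjTranspose_smul, sub_mul, mul_sub, smul_mul_assoc,
    mul_smul_comm, hKP, hPK, conjTranspose_map_ofReal, ← map_ofReal_mul, ← map_ofReal_mul]
  linear_combination (norm := module) -hRicC

end Matrix

theorem riccati_gives_hurwitz_general {d : ℕ}
    (S P : Matrix (Fin d) (Fin d) ℝ) (C : Matrix (Fin 1) (Fin d) ℝ)
    (μ a : ℝ) (ha : 0 < a)
    (hP : P.PosDef)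
    (hRic : S * P + P * Sᵀ - (2 * μ) • (P * Cᵀ * C * P) + a • (1 : Matrix (Fin d) (Fin d) ℝ) = 0)
    (lam : ℂ) (hlam : μ ≤ lam.re) :
    ∀ z ∈ spectrum ℂ
      ((S.map (Complex.ofReal)) - lam • ((P * Cᵀ * C).map (Complex.ofReal))),
      z.re < 0 := by
  intro z hz
  have hPsymm : Pᵀ = P := by rw [← conjTranspose_eq_transpose_of_trivial, hP.isHermitian.eq]
  have hcoeff : 0 ≤ lam + star lam - 2 * μ := by
    rw [Complex.star_def, Complex.add_conj, ← Complex.ofReal_ofNat, ← Complex.ofReal_mul,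
      ← Complex.ofReal_sub, Complex.zero_le_real]
    linarith
  refine re_lt_zero_of_mem_spectrum_of_posDef hP.map_ofReal ?_ hz
  rw [neg_lyapunov_eq_of_riccati hPsymm hRic lam]
  exact (PosDef.one.smul (Complex.zero_lt_real.mpr ha)).add_posSemidef
    ((posSemidef_conjTranspose_mul_self _).smul hcoeff)

/-- If `P ≻ 0` solves the Riccati equation `SP + PSᵀ - 2μ P CᵀC P + aI = 0` with
    `a > 0`, and `λ ∈ ℂ` has `Re λ ≥ μ`, then `S - λ P CᵀC` is Hurwitz. -/
theorem riccati_gives_hurwitz {d : ℕ}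
    (S P : Matrix (Fin d) (Fin d) ℝ) (C : Matrix (Fin 1) (Fin d) ℝ)
    (μ a : ℝ) (hμ : 0 < μ) (ha : 0 < a)
    (hP : P.PosDef)
    (hRic : S * P + P * Sᵀ - (2 * μ) • (P * Cᵀ * C * P) + a • (1 : Matrix (Fin d) (Fin d) ℝ) = 0)
    (lam : ℂ) (hlam : μ ≤ lam.re) :
    ∀ z ∈ spectrum ℂ
      ((S.map (Complex.ofReal)) - lam • ((P * Cᵀ * C).map (Complex.ofReal))),
      z.re < 0 :=
  riccati_gives_hurwitz_general S P C μ a ha hP hRic lam hlam
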